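/- Let G be a torsion-free abelian group and let Π = (P, 𝓛) be a finite projective plane. Then every line-invariant function v : P → G is constant; in particular, Π is not pseudomagic over G. -/

import Mathlib

open Configuration

noncomputable def lineSum {P L G : Type*} [Membership P L] [AddCommMonoid G]
    (v : P → G) (l : L) : G :=
  ∑ᶠ x ∈ {x : P | x ∈ l}, v x

def LineInvariant (P L : Type*) {G : Type*} [Membership P L] [AddCommMonoid G]
    (v : P → G) : Prop :=
  ∀ l l' : L, lineSum v l = lineSum v l'

/-!
Fix a point `a` and add up the (common) line sums `c` over the `n + 1` lines through `a`, where
`n` is the order of the plane. Every other point lies on exactly one of these lines, so the total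
is `n • v a + ∑ x, v x`. Hence `n • v a = (n + 1) • c - ∑ x, v x` does not depend on `a`, and
`n • (v a - v b) = 0` forces `v a = v b` in a torsion-free group since `n ≥ 2`.
-/

open Finset

namespace Configuration

open scoped Classical

variable {P L G : Type*} [Membership P L]

theorem lineSum_eq_sum [Fintype P] [AddCommMonoid G] (v : P → G) (l : L) :
    lineSum v l = ∑ x with x ∈ l, v x := by
  rw [lineSum, finsum_mem_eq_toFinset_sum]
  congr 1
  ext; simp

theorem card_lines_through [Fintype L] (a : P) :
    #{l : L | a ∈ l} = lineCount L a := by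
  rw [lineCount, Nat.card_eq_fintype_card, Fintype.card_subtype]

theorem card_lines_through_pair [Fintype L] [HasLines P L] {a x : P} (h : a ≠ x) :
    #{l : L | a ∈ l ∧ x ∈ l} = 1 := by
  obtain ⟨l, hl, hl_unique⟩ := HasLines.existsUnique_line P L a x h
  exact card_eq_one.mpr ⟨l, by ext m; simpa using ⟨hl_unique m, fun hm => hm ▸ hl⟩⟩

/-- Double counting: every point other than `a` lies on exactly one line through `a`. -/
theorem sum_lineSum_lines_through [Fintype P] [Fintype L] [HasLines P L] [AddCommMonoid G]
    (v : P → G) (a : P) :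
    ∑ l : L with a ∈ l, lineSum v l = lineCount L a • v a + ∑ x ∈ univ.erase a, v x := by
  have hcount : ∀ x, #{l : L | a ∈ l ∧ x ∈ l} • v x =
      if x = a then lineCount L a • v a else v x := by
    intro x
    split_ifs with hx
    · subst hx; simp [← card_lines_through]
    · rw [card_lines_through_pair (Ne.symm hx), one_smul]
  calc ∑ l : L with a ∈ l, lineSum v l
      = ∑ x, #{l : L | a ∈ l ∧ x ∈ l} • v x := by
        simp only [lineSum_eq_sum, card_eq_sum_ones, sum_smul, sum_filter]
        rw [sum_comm]
        refine sum_congr rfl fun l _ => ?_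
        by_cases ha : a ∈ l <;> simp [ha, ite_smul]
    _ = lineCount L a • v a + ∑ x ∈ univ.erase a, v x := by
        rw [← add_sum_erase _ _ (mem_univ a), hcount, if_pos rfl]
        congr 1
        exact sum_congr rfl fun x hx => by rw [hcount, if_neg (ne_of_mem_erase hx)]

theorem ProjectivePlane.sum_lineSum_lines_through [Fintype P] [Fintype L] [ProjectivePlane P L]
    [AddCommMonoid G] (v : P → G) (a : P) :
    ∑ l : L with a ∈ l, lineSum v l = ProjectivePlane.order P L • v a + ∑ x, v x := by
  rw [Configuration.sum_lineSum_lines_through, ProjectivePlane.lineCount_eq, succ_nsmul,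
    add_assoc, add_sum_erase _ _ (mem_univ a)]

theorem ProjectivePlane.order_nsmul_eq_of_lineInvariant [Fintype P] [Fintype L]
    [ProjectivePlane P L] [AddCancelCommMonoid G] {v : P → G} (hv : LineInvariant P L v)
    (a b : P) : ProjectivePlane.order P L • v a = ProjectivePlane.order P L • v b := by
  obtain ⟨l₀, -⟩ := Nondegenerate.exists_line (L := L) a
  have h : ∀ p : P, ProjectivePlane.order P L • v p + ∑ x, v x =
      (ProjectivePlane.order P L + 1) • lineSum v l₀ := by
    intro p
    rw [← ProjectivePlane.sum_lineSum_lines_through, sum_congr rfl fun l _ => hv l l₀, sum_const,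
      card_lines_through, ProjectivePlane.lineCount_eq]
  exact add_right_cancel ((h a).trans (h b).symm)

end Configuration

theorem stmt_1 {P L G : Type*} [Membership P L] [Fintype P] [Fintype L]
    [ProjectivePlane P L] [AddCommGroup G]
    (htf : ∀ g : G, g ≠ 0 → ¬IsOfFinAddOrder g) :
    (∀ v : P → G, LineInvariant P L v → ∀ a b : P, v a = v b) ∧
      ¬ ∃ v : P → G, LineInvariant P L v ∧ ¬ ∀ a b : P, v a = v b := by
  have hconst : ∀ v : P → G, LineInvariant P L v → ∀ a b : P, v a = v b := by
    intro v hv a b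
    by_contra hab
    refine htf (v a - v b) (sub_ne_zero.mpr hab) (isOfFinAddOrder_iff_nsmul_eq_zero.mpr
      ⟨ProjectivePlane.order P L, one_pos.trans (ProjectivePlane.one_lt_order P L), ?_⟩)
    rw [smul_sub, ProjectivePlane.order_nsmul_eq_of_lineInvariant hv a b, sub_self]
  exact ⟨hconst, fun ⟨v, hv, hv_nonconst⟩ => hv_nonconst (hconst v hv)⟩
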